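/- Let τ ∈ ℂ with Im τ > 0 and let θ: ℂ → ℂ satisfy θ(z+1) = -θ(z) and θ(z+τ) = -exp(-πi(2z+τ)) θ(z) for all z. Fix integers N ≥ 1, m₁, m₂ with m₂ ≠ 0 or m₁ ≠ 0, set η = (m₁ + m₂τ)/(2N), and define the renormalized theta function θ̃(z) = θ(z) exp(πi m₂ (z - 1/2)² / (2Nη)). Then θ̃(z + 2Nη) = (-1)^{m₁(m₂+1)} θ̃(z) for all z ∈ ℂ. -/

import Mathlib

/-!
Multiplying `θ` by the Gaussian `exp (πi z² / τ)` turns its quasi-periodicity in the `τ`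
direction into plain antiperiodicity, so shifts by `m₂ τ` (and by `m₁`) are handled by the
general theory of antiperiodic functions. For `w = m₁ + m₂ τ = 2Nη` the exponential multiplier
of `θ (z + w)` is then cancelled by the renormalizing factor `exp (πi m₂ (z - 1/2)² / w)`, up to
the sign `exp (πi m₂ (m₁ - 1))`.
-/

open Complex Function
open scoped Real

theorem exp_int_mul_pi_mul_I (k : ℤ) : exp (k * (π * I)) = (-1) ^ k := by
  rw [exp_int_mul, exp_pi_mul_I]

def ThetaQuasiperiodic (τ : ℂ) (θ : ℂ → ℂ) : Prop :=
  ∀ z, θ (z + τ) = -exp (-(π * I * (2 * z + τ))) * θ z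

namespace ThetaQuasiperiodic

variable {τ : ℂ} {θ : ℂ → ℂ}

theorem antiperiodic_mul_exp (hθ : ThetaQuasiperiodic τ θ) (hτ : τ ≠ 0) :
    Antiperiodic (fun z ↦ θ z * exp (π * I * z ^ 2 / τ)) τ := by
  intro z
  have hexp : exp (-(π * I * (2 * z + τ))) * exp (π * I * (z + τ) ^ 2 / τ) =
      exp (π * I * z ^ 2 / τ) := by
    rw [← exp_add]; congr 1; field_simp; ring
  simp only [hθ z]
  linear_combination -θ z * hexp

theorem add_int_mul_eq (hθ : ThetaQuasiperiodic τ θ) (hτ : τ ≠ 0) (m : ℤ) (z : ℂ) :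
    θ (z + m * τ) = (-1) ^ m * exp (-(π * I * (2 * m * z + m ^ 2 * τ))) * θ z := by
  have hshift := (hθ.antiperiodic_mul_exp hτ).add_int_mul_eq (x := z) m
  rw [Int.cast_negOnePow] at hshift
  have hexp : exp (-(π * I * (2 * m * z + m ^ 2 * τ))) * exp (π * I * (z + m * τ) ^ 2 / τ) =
      exp (π * I * z ^ 2 / τ) := by
    rw [← exp_add]; congr 1; field_simp; ring
  rw [← mul_left_inj' (exp_ne_zero (π * I * (z + m * τ) ^ 2 / τ))]
  linear_combination hshift - (-1) ^ m * θ z * hexp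

theorem add_int_add_int_mul_eq (hθ : ThetaQuasiperiodic τ θ) (h1 : Antiperiodic θ 1)
    (hτ : τ ≠ 0) (m₁ m₂ : ℤ) (z : ℂ) :
    θ (z + (m₁ + m₂ * τ)) =
      (-1) ^ (m₁ + m₂) * exp (-(π * I * (2 * m₂ * z + m₂ ^ 2 * τ))) * θ z := by
  have h := h1.add_int_mul_eq (x := z + m₂ * τ) m₁
  rw [Int.cast_negOnePow, mul_one, hθ.add_int_mul_eq hτ] at h
  rw [show z + (m₁ + m₂ * τ) = z + m₂ * τ + m₁ by ring, h, zpow_add₀ (by norm_num)]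
  ring

theorem mul_exp_add_int_add_int_mul_eq (hθ : ThetaQuasiperiodic τ θ) (h1 : Antiperiodic θ 1)
    (hτ : τ ≠ 0) (m₁ m₂ : ℤ) {w : ℂ} (hw_def : w = m₁ + m₂ * τ) (hw : w ≠ 0) (z : ℂ) :
    θ (z + w) * exp (π * I * m₂ * (z + w - 1 / 2) ^ 2 / w) =
      (-1) ^ (m₁ * (m₂ + 1)) * (θ z * exp (π * I * m₂ * (z - 1 / 2) ^ 2 / w)) := by
  have hexp : exp (-(π * I * (2 * m₂ * z + m₂ ^ 2 * τ))) *
      exp (π * I * m₂ * (z + w - 1 / 2) ^ 2 / w) =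
      exp ((m₂ * (m₁ - 1) : ℤ) * (π * I)) * exp (π * I * m₂ * (z - 1 / 2) ^ 2 / w) := by
    rw [← exp_add, ← exp_add]
    congr 1
    field_simp
    rw [hw_def]
    push_cast
    ring
  rw [exp_int_mul_pi_mul_I] at hexp
  have hsign : (-1 : ℂ) ^ (m₁ + m₂) * (-1) ^ (m₂ * (m₁ - 1)) = (-1) ^ (m₁ * (m₂ + 1)) := by
    rw [← zpow_add₀ (by norm_num)]
    ring_nf
  rw [hw_def, hθ.add_int_add_int_mul_eq h1 hτ, ← hw_def, ← hsign]
  linear_combination (-1) ^ (m₁ + m₂) * θ z * hexp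

end ThetaQuasiperiodic

theorem intCast_add_intCast_mul_ne_zero {τ : ℂ} (hτ : 0 < τ.im) {m₁ m₂ : ℤ}
    (hm : m₁ ≠ 0 ∨ m₂ ≠ 0) : (m₁ : ℂ) + m₂ * τ ≠ 0 := by
  intro h
  have hm₂ : m₂ = 0 := by
    simpa [hτ.ne'] using congrArg im h
  subst hm₂
  simp_all

/-- quasi-periodicity of the renormalized theta function
θ̃(z) = θ(z) exp(πi m₂ (z-1/2)²/(2Nη)) under z → z + 2Nη, where η = (m₁ + m₂τ)/(2N). -/
theorem renormalized_theta_quasi_periodic (τ : ℂ) (hτ : 0 < τ.im) (θ : ℂ → ℂ)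
    (h1 : ∀ z : ℂ, θ (z + 1) = -θ z)
    (h2 : ∀ z : ℂ, θ (z + τ) = -Complex.exp (-((Real.pi : ℂ) * Complex.I * (2 * z + τ))) * θ z)
    (N : ℕ) (hN : 1 ≤ N) (m₁ m₂ : ℤ) (hm : m₁ ≠ 0 ∨ m₂ ≠ 0)
    (η : ℂ) (hη : η = ((m₁ : ℂ) + (m₂ : ℂ) * τ) / (2 * N))
    (θt : ℂ → ℂ)
    (hθt : ∀ z : ℂ, θt z = θ z *
      Complex.exp ((Real.pi : ℂ) * Complex.I * (m₂ : ℂ) * (z - 1 / 2) ^ 2 / (2 * (N : ℂ) * η))) :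
    ∀ z : ℂ, θt (z + 2 * (N : ℂ) * η) = (-1 : ℂ) ^ (m₁ * (m₂ + 1)) * θt z := by
  intro z
  have hN₀ : (N : ℂ) ≠ 0 := by exact_mod_cast (by omega : N ≠ 0)
  have hperiod : 2 * (N : ℂ) * η = m₁ + m₂ * τ := by
    rw [hη]
    field_simp
  have hτ₀ : τ ≠ 0 := by
    rintro rfl
    simp at hτ
  rw [hθt, hθt]
  exact ThetaQuasiperiodic.mul_exp_add_int_add_int_mul_eq h2 h1 hτ₀ m₁ m₂ hperiod
    (hperiod ▸ intCast_add_intCast_mul_ne_zero hτ hm) z
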